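/- arXiv:2007.09173 — 2 statements merged into one kernel-verified Lean document; each statement's English description precedes it below -/
import Mathlib

section
/- Let (X, ρ) be a metric space, λ ∈ Δ∞, and x = (x_k)_{k∈ℕ} a sequence in X. Then x is λ-statistically convergent to L ∈ X if and only if there exists a sequence g = (g_k)_{k∈ℕ} in X such that the set {k ∈ ℕ : x_k ≠ g_k} has λ-density zero and (g_k) converges to L in the metric topology. (This is the paper's Theorem 3.5, specialized to the PM space induced by a metric, where F_{xy} = ε_{ρ(x,y)} and the strong topology is the metric topology.) -/
open Filter Topology

/-- `l` belongs to the class `Δ∞`: a nondecreasing (for indices `≥ 1`) sequence of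
positive reals tending to `∞` with `l 1 = 1` and `l (n+1) ≤ l n + 1`. -/
def DeltaInfty (l : ℕ → ℝ) : Prop :=
  (∀ n, 1 ≤ n → 0 < l n) ∧ (∀ m n, 1 ≤ m → m ≤ n → l m ≤ l n) ∧
    Tendsto l atTop atTop ∧ l 1 = 1 ∧ ∀ n, 1 ≤ n → l (n + 1) ≤ l n + 1

open Classical in
/-- The number of elements of `M` in the window `I_n = [n - l n + 1, n] ∩ ℕ`. -/
noncomputable def lamCount (l : ℕ → ℝ) (M : Set ℕ) (n : ℕ) : ℕ :=
  ((Finset.Icc 1 n).filter (fun (k : ℕ) => ((n : ℝ) - l n + 1 ≤ (k : ℝ)) ∧ k ∈ M)).card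

/-- `M ⊆ ℕ` has `λ`-density `r`: `|{k ∈ I_n : k ∈ M}| / l n → r`. -/
def lamDensity (l : ℕ → ℝ) (M : Set ℕ) (r : ℝ) : Prop :=
  Tendsto (fun n => (lamCount l M n : ℝ) / l n) atTop (𝓝 r)

/-- `x` is `λ`-statistically convergent to `L` in the metric space `X`. -/
def LamStatConv {X : Type*} [MetricSpace X] (l : ℕ → ℝ) (x : ℕ → X) (L : X) : Prop :=
  ∀ ε > 0, lamDensity l {k | ε ≤ dist (x k) L} 0


/-! The sets of `λ`-density zero form an ideal containing the finite sets, and it has the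
`P`-property: for an increasing sequence `A j` of such sets there is a single set `B` of density
zero with every `A j \ B` finite. Applied to `A j = {k | 1/(j+1) ≤ ρ(x k, L)}`, replacing `x k`
by `L` on `B` yields the convergent sequence `g`. Conversely, `{k | ε ≤ ρ(x k, L)}` is contained
in `{k | x k ≠ g k}` up to finitely many indices. -/

section LamDensity

variable {l : ℕ → ℝ} {M M' : Set ℕ}

lemma lamCount_le_of_inter_Iic_subset {n : ℕ} (h : M ∩ Set.Iic n ⊆ M') :
    lamCount l M n ≤ lamCount l M' n := by
  classical
  refine Finset.card_le_card fun k hk => ?_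
  simp only [Finset.mem_filter, Finset.mem_Icc] at hk ⊢
  exact ⟨hk.1, hk.2.1, h ⟨hk.2.2, hk.1.2⟩⟩

lemma lamCount_union_le (n : ℕ) :
    lamCount l (M ∪ M') n ≤ lamCount l M n + lamCount l M' n := by
  classical
  refine (Finset.card_le_card fun k hk => ?_).trans (Finset.card_union_le _ _)
  simp only [Finset.mem_filter, Finset.mem_union, Set.mem_union] at hk ⊢
  tauto

lemma lamCount_Iio_le (N n : ℕ) : lamCount l (Set.Iio N) n ≤ N := by
  classical
  calc lamCount l (Set.Iio N) n ≤ (Finset.range N).card :=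
        Finset.card_le_card fun k hk => by simp_all
    _ = N := Finset.card_range N

lemma norm_lamCount_div_le {n : ℕ} (h : lamCount l M n ≤ lamCount l M' n) :
    ‖(lamCount l M n : ℝ) / l n‖ ≤ ‖(lamCount l M' n : ℝ) / l n‖ := by
  rw [norm_div, norm_div, Real.norm_natCast, Real.norm_natCast]
  gcongr

lemma lamDensity_zero_mono (h : M ⊆ M') (h' : lamDensity l M' 0) : lamDensity l M 0 :=
  squeeze_zero_norm (fun n => norm_lamCount_div_le (lamCount_le_of_inter_Iic_subset
    (Set.inter_subset_left.trans h))) (by simpa using h'.norm)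

lemma lamDensity_zero_union (h : lamDensity l M 0) (h' : lamDensity l M' 0) :
    lamDensity l (M ∪ M') 0 := by
  refine squeeze_zero_norm (fun n => ?_) (by simpa using h.norm.add h'.norm)
  simp only [norm_div, Real.norm_natCast, ← add_div]
  exact div_le_div_of_nonneg_right (mod_cast lamCount_union_le n) (norm_nonneg _)

lemma lamDensity_zero_Iio (hl : Tendsto l atTop atTop) (N : ℕ) : lamDensity l (Set.Iio N) 0 := by
  have hpos : ∀ᶠ n in atTop, 0 < l n := hl.eventually_gt_atTop 0
  refine squeeze_zero' (hpos.mono fun n hn => by positivity) ?_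
    ((tendsto_const_nhds (x := (N : ℝ))).div_atTop hl)
  filter_upwards [hpos] with n hn
  gcongr
  exact_mod_cast lamCount_Iio_le N n

lemma exists_lamDensity_zero_eventually_subset {A : ℕ → Set ℕ} (hA : Monotone A)
    (h : ∀ j, lamDensity l (A j) 0) :
    ∃ B, lamDensity l B 0 ∧ ∀ j, ∀ᶠ k in atTop, k ∈ A j → k ∈ B := by
  have hev : ∀ j : ℕ, ∀ᶠ m in atTop, ∀ n ≥ m,
      ‖(lamCount l (A j) n : ℝ) / l n‖ < 1 / ((j : ℝ) + 1) := fun j =>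
    eventually_forall_ge_atTop.2 <|
      (h j).norm.eventually (gt_mem_nhds (by rw [norm_zero]; positivity))
  obtain ⟨N, hN_mono, hN⟩ := extraction_forall_of_eventually hev
  -- Up to time `n`, the set `B` built below lies in `A (J n)`, whose ratio at `n` is `< 1/(J n+1)`.
  let J n := Nat.findGreatest (fun j => N j ≤ n) n
  have hJ_spec {n} (hn : N 0 ≤ n) : N (J n) ≤ n :=
    Nat.findGreatest_spec (P := fun j => N j ≤ n) (Nat.zero_le n) hn
  have hJ_ge {j n} (hjn : N j ≤ n) : j ≤ J n :=
    Nat.le_findGreatest ((hN_mono.id_le j).trans hjn) hjn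
  have hJ_tendsto : Tendsto J atTop atTop :=
    tendsto_atTop.2 fun j => (eventually_ge_atTop (N j)).mono fun n => hJ_ge
  refine ⟨⋃ j, A j ∩ Set.Ici (N j), ?_,
    fun j => (eventually_ge_atTop (N j)).mono fun k hk hkA => Set.mem_iUnion.2 ⟨j, hkA, hk⟩⟩
  refine squeeze_zero_norm' ?_ (tendsto_one_div_add_atTop_nhds_zero_nat.comp hJ_tendsto)
  filter_upwards [eventually_ge_atTop (N 0)] with n hn
  have hsub : (⋃ j, A j ∩ Set.Ici (N j)) ∩ Set.Iic n ⊆ A (J n) := by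
    rintro k ⟨hk, hkn⟩
    obtain ⟨j, hkA, hjk⟩ := Set.mem_iUnion.1 hk
    exact hA (hJ_ge (le_trans hjk hkn)) hkA
  exact (norm_lamCount_div_le (lamCount_le_of_inter_Iic_subset hsub)).trans
    (hN (J n) n (hJ_spec hn)).le

end LamDensity

theorem LamStatConv.exists_agrees_with_convergent {X : Type*} [MetricSpace X] {l : ℕ → ℝ}
    {x : ℕ → X} {L : X} (hx : LamStatConv l x L) :
    ∃ g : ℕ → X, lamDensity l {k | x k ≠ g k} 0 ∧ Tendsto g atTop (𝓝 L) := by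
  classical
  have hA : Monotone fun j : ℕ => {k | 1 / ((j : ℝ) + 1) ≤ dist (x k) L} := by
    intro i j hij k (hk : 1 / ((i : ℝ) + 1) ≤ dist (x k) L)
    exact le_trans (by gcongr) hk
  obtain ⟨B, hB, hAB⟩ :=
    exists_lamDensity_zero_eventually_subset hA fun j => hx _ Nat.one_div_pos_of_nat
  refine ⟨B.piecewise (fun _ => L) x, lamDensity_zero_mono (fun k hk => ?_) hB, ?_⟩
  · by_contra hkB
    exact hk (Set.piecewise_eq_of_notMem _ _ _ hkB).symm
  · refine Metric.tendsto_atTop.2 fun ε hε => ?_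
    obtain ⟨j, hj⟩ := exists_nat_one_div_lt hε
    obtain ⟨N, hN⟩ := (hAB j).exists_forall_of_atTop
    refine ⟨N, fun k hk => ?_⟩
    by_cases hkB : k ∈ B
    · simpa [hkB] using hε
    · rw [Set.piecewise_eq_of_notMem _ _ _ hkB]
      exact (not_le.1 fun h => hkB (hN k hk h)).trans hj

theorem lamStatConv_of_agrees_with_convergent {X : Type*} [MetricSpace X] {l : ℕ → ℝ}
    (hl : Tendsto l atTop atTop) {x g : ℕ → X} {L : X} (hd : lamDensity l {k | x k ≠ g k} 0)
    (hg : Tendsto g atTop (𝓝 L)) : LamStatConv l x L := by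
  intro ε hε
  obtain ⟨N, hN⟩ := Metric.tendsto_atTop.1 hg ε hε
  refine lamDensity_zero_mono (fun k hk => ?_) (lamDensity_zero_union hd (lamDensity_zero_Iio hl N))
  rw [Set.mem_union, or_iff_not_imp_right]
  intro hkN hxg
  exact (hN k (not_lt.1 hkN)).not_ge (hxg ▸ hk)

theorem lamStatConv_iff_agrees_with_convergent {X : Type*} [MetricSpace X] (l : ℕ → ℝ)
    (hl : DeltaInfty l) (x : ℕ → X) (L : X) :
    LamStatConv l x L ↔
      ∃ g : ℕ → X, lamDensity l {k | x k ≠ g k} 0 ∧ Tendsto g atTop (𝓝 L) :=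
  ⟨LamStatConv.exists_agrees_with_convergent,
    fun ⟨_, hd, hg⟩ => lamStatConv_of_agrees_with_convergent hl.2.2.1 hd hg⟩
end

section
/- Let (X, ρ) be a metric space, λ ∈ Δ∞, and x = (x_k)_{k∈ℕ} a sequence in X. Then x is λ-statistically Cauchy if and only if for every η > 0 there exists a set G ⊆ ℕ with λ-density d_λ(G) = 0 such that ρ(x_m, x_n) < η for all m, n ∉ G. (Equivalence (1) ⇔ (2) of the paper's Lemma 3.6.) -/
/-! The exceptional set for `η` is `{k | η / 2 ≤ dist (x k) (x N₀)}`, by the triangle inequality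
through `x N₀`. Conversely, a set of `λ`-density zero cannot be all of `ℕ`, since `ℕ` has
`λ`-density one (its window `I_n` has exactly `⌊λ_n⌋` elements); any `N₀` outside the exceptional
set `G` then works, because `{k | η ≤ dist (x k) (x N₀)} ⊆ G`. -/

open Filter Topology

/-- `x` is `λ`-statistically Cauchy in the metric space `X`. -/
def LamStatCauchy {X : Type*} [MetricSpace X] (l : ℕ → ℝ) (x : ℕ → X) : Prop :=
  ∀ η > 0, ∃ N₀ : ℕ, lamDensity l {k | η ≤ dist (x k) (x N₀)} 0

lemma lamCount_mono (l : ℕ → ℝ) {M N : Set ℕ} (h : M ⊆ N) (n : ℕ) :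
    lamCount l M n ≤ lamCount l N n := by
  refine Finset.card_le_card fun k hk => ?_
  simp only [Finset.mem_filter] at hk ⊢
  exact ⟨hk.1, hk.2.1, h hk.2.2⟩

lemma lamDensity_zero_of_subset {l : ℕ → ℝ} {M G : Set ℕ} (h : M ⊆ G)
    (hG : lamDensity l G 0) : lamDensity l M 0 := by
  refine squeeze_zero_norm (fun n => ?_) (by simpa using hG.norm)
  simp only [Real.norm_eq_abs, abs_div, Nat.abs_cast]
  gcongr
  exact lamCount_mono l h n

lemma lamCount_univ {l : ℕ → ℝ} {n : ℕ} (hn : l n ≤ n) : lamCount l Set.univ n = ⌊l n⌋₊ := by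
  have hfloor : ⌊l n⌋₊ ≤ n := Nat.floor_le_of_le hn
  suffices h : lamCount l Set.univ n = (Finset.Icc (n + 1 - ⌊l n⌋₊) n).card by
    rw [h, Nat.card_Icc]
    omega
  unfold lamCount
  congr 1
  ext k
  simp only [Finset.mem_filter, Finset.mem_Icc, Set.mem_univ, and_true]
  constructor
  · rintro ⟨⟨hk1, hkn⟩, hk⟩
    have : n + 1 - k ≤ ⌊l n⌋₊ := by
      rw [Nat.le_floor_iff' (by omega), Nat.cast_sub (by omega)]
      push_cast
      linarith
    omega
  · rintro ⟨hk, hkn⟩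
    have : n + 1 - k ≤ ⌊l n⌋₊ := by omega
    rw [Nat.le_floor_iff' (by omega), Nat.cast_sub (by omega)] at this
    push_cast at this
    exact ⟨⟨by omega, hkn⟩, by linarith⟩

namespace DeltaInfty

variable {l : ℕ → ℝ}

lemma le_natCast (hl : DeltaInfty l) {n : ℕ} (hn : 1 ≤ n) : l n ≤ n := by
  obtain ⟨-, -, -, h1, hstep⟩ := hl
  induction n, hn using Nat.le_induction with
  | base => simp [h1]
  | succ n hn ih =>
    push_cast
    linarith [hstep n hn]

lemma lamDensity_univ (hl : DeltaInfty l) : lamDensity l Set.univ 1 := by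
  refine (tendsto_nat_floor_div_atTop.comp hl.2.2.1).congr' ?_
  filter_upwards [eventually_ge_atTop 1] with n hn
  simp [lamCount_univ (hl.le_natCast hn)]

lemma exists_notMem_of_lamDensity_zero (hl : DeltaInfty l) {G : Set ℕ}
    (hG : lamDensity l G 0) : ∃ n, n ∉ G := by
  by_contra! hall
  rw [Set.eq_univ_of_forall hall] at hG
  exact zero_ne_one (tendsto_nhds_unique hG hl.lamDensity_univ)

end DeltaInfty

theorem lamStatCauchy_iff_exists_small_exceptional_set {X : Type*} [MetricSpace X]
    (l : ℕ → ℝ) (hl : DeltaInfty l) (x : ℕ → X) :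
    LamStatCauchy l x ↔
      ∀ η > 0, ∃ G : Set ℕ, lamDensity l G 0 ∧
        ∀ m ∉ G, ∀ n ∉ G, dist (x m) (x n) < η := by
  constructor
  · intro h η hη
    obtain ⟨N₀, hN₀⟩ := h (η / 2) (by positivity)
    refine ⟨_, hN₀, fun m hm n hn => ?_⟩
    simp only [Set.mem_ofPred_eq, not_le] at hm hn
    calc dist (x m) (x n) ≤ dist (x m) (x N₀) + dist (x n) (x N₀) := dist_triangle_right _ _ _
      _ < η := by linarith
  · intro h η hη
    obtain ⟨G, hG, hGdist⟩ := h η hη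
    obtain ⟨N₀, hN₀⟩ := hl.exists_notMem_of_lamDensity_zero hG
    refine ⟨N₀, lamDensity_zero_of_subset (fun k hk => ?_) hG⟩
    by_contra hkG
    exact (hGdist k hkG N₀ hN₀).not_ge hk
end
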